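/- arXiv:1401.6023 — 3 statements merged into one kernel-verified Lean document; each statement's English description precedes it below -/
import Mathlib

section
/- Let Y₁, X₁, Y₂, X₂ be mutually independent finite-valued random variables, and let Y₃ be a finite-valued random variable such that Y₃ is conditionally independent of (Y₁, Y₂) given (X₁, X₂). Then I(Y₁, X₁ ; Y₂, X₂, Y₃) = I(X₁ ; Y₃ | X₂). -/
open Finset

/-- A probability mass function on a finite sample space. -/
structure FinProb (Ω : Type) [Fintype Ω ] where
  p : Ω → ℝ
  nonneg : ∀ ω, 0 ≤ p ω
  sum_one : ∑ ω, p ω = 1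

variable {Ω : Type} [Fintype Ω]

/-- `P(X = x)`. -/
noncomputable def probOf (μ : FinProb Ω) {α : Type} [DecidableEq α] (X : Ω → α) (x : α) : ℝ :=
  ∑ ω ∈ Finset.univ.filter (fun ω => X ω = x), μ.p ω

/-- Shannon entropy `H(X)` of a finite-valued random variable. -/
noncomputable def Hent (μ : FinProb Ω) {α : Type} [Fintype α] [DecidableEq α] (X : Ω → α) : ℝ :=
  ∑ x : α, Real.negMulLog (probOf μ X x)

/-- Conditional entropy `H(X | Y)`. -/
noncomputable def Hcond (μ : FinProb Ω) {α β : Type} [Fintype α] [DecidableEq α]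
    [Fintype β] [DecidableEq β] (X : Ω → α) (Y : Ω → β) : ℝ :=
  Hent μ (fun ω => (X ω, Y ω)) - Hent μ Y

/-- Mutual information `I(X ; Y)`. -/
noncomputable def MI (μ : FinProb Ω) {α β : Type} [Fintype α] [DecidableEq α]
    [Fintype β] [DecidableEq β] (X : Ω → α) (Y : Ω → β) : ℝ :=
  Hent μ X + Hent μ Y - Hent μ (fun ω => (X ω, Y ω))

/-- Conditional mutual information `I(X ; Y | Z)`. -/
noncomputable def CMI (μ : FinProb Ω) {α β γ : Type} [Fintype α] [DecidableEq α]
    [Fintype β] [DecidableEq β] [Fintype γ] [DecidableEq γ]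
    (X : Ω → α) (Y : Ω → β) (Z : Ω → γ) : ℝ :=
  Hcond μ X Z + Hcond μ Y Z - Hcond μ (fun ω => (X ω, Y ω)) Z

/-- The tuple random variable `U_T = (U_i : i ∈ T)`. -/
def tupleOn {m : ℕ} {α : Fin m → Type} (U : ∀ i, Ω → α i) (T : Finset (Fin m)) :
    Ω → (∀ i : {i // i ∈ T}, α i.1) := fun ω i => U i.1 ω


section Aux

variable (μ : FinProb Ω) {α β : Type} [Fintype α] [DecidableEq α] [Fintype β] [DecidableEq β]

lemma probOf_nonneg (X : Ω → α) (x : α) : 0 ≤ probOf μ X x :=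
  Finset.sum_nonneg fun ω _ => μ.nonneg ω

lemma probOf_sum_one (X : Ω → α) : ∑ x, probOf μ X x = 1 := by
  unfold probOf
  rw [Finset.sum_fiberwise]
  exact μ.sum_one

lemma probOf_inj (g : α → β) (hg : Function.Injective g) (X : Ω → α) (x : α) :
    probOf μ (fun ω => g (X ω)) (g x) = probOf μ X x := by
  unfold probOf
  congr 1
  ext ω
  simp [hg.eq_iff]

lemma probOf_marg (X : Ω → α) (V : Ω → β) (x : α) :
    probOf μ X x = ∑ v, probOf μ (fun ω => (X ω, V ω)) (x, v) := by
  unfold probOf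
  rw [← Finset.sum_fiberwise (Finset.univ.filter fun ω => X ω = x) V μ.p]
  refine Finset.sum_congr rfl fun v _ => ?_
  rw [Finset.filter_filter]
  congr 1
  ext ω
  simp [Prod.ext_iff, and_comm]

lemma Hent_comp_bij (g : α → β) (hg : Function.Bijective g) (X : Ω → α) :
    Hent μ (fun ω => g (X ω)) = Hent μ X := by
  unfold Hent
  symm
  refine Fintype.sum_bijective g hg _ _ fun x => ?_
  rw [probOf_inj μ g hg.injective]

lemma Hent_add_of_indep (X : Ω → α) (Y : Ω → β)
    (h : ∀ x y, probOf μ (fun ω => (X ω, Y ω)) (x, y) = probOf μ X x * probOf μ Y y) :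
    Hent μ (fun ω => (X ω, Y ω)) = Hent μ X + Hent μ Y := by
  unfold Hent
  rw [Fintype.sum_prod_type]
  simp only [h, Real.negMulLog_mul]
  have e1 : ∀ x : α, ∑ y : β, (probOf μ Y y * Real.negMulLog (probOf μ X x)
      + probOf μ X x * Real.negMulLog (probOf μ Y y))
      = Real.negMulLog (probOf μ X x) + probOf μ X x * ∑ y : β, Real.negMulLog (probOf μ Y y) := by
    intro x
    rw [Finset.sum_add_distrib, ← Finset.sum_mul, probOf_sum_one, one_mul, ← Finset.mul_sum]
  simp only [e1]
  rw [Finset.sum_add_distrib, ← Finset.sum_mul, probOf_sum_one, one_mul]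

lemma sum2_factor {A C : Type} [Fintype A] [Fintype C] (f : A → ℝ) (g : C → ℝ) (K : ℝ) :
    ∑ a, ∑ c, f a * g c * K = (∑ a, f a) * (∑ c, g c) * K := by
  rw [Finset.sum_mul_sum, Finset.sum_mul]
  exact Finset.sum_congr rfl fun a _ => (Finset.sum_mul _ _ _).symm

end Aux

section Aux2

variable (μ : FinProb Ω) {α β : Type} [Fintype α] [DecidableEq α] [Fintype β] [DecidableEq β]

lemma probOf_reindex (g : α → β) (g' : β → α) (h : ∀ x, g' (g x) = x) (X : Ω → α) (x : α) :
    probOf μ (fun ω => g (X ω)) (g x) = probOf μ X x :=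
  probOf_inj μ g (Function.LeftInverse.injective h) X x

lemma Hent_reindex (g : α → β) (g' : β → α) (h1 : ∀ x, g' (g x) = x)
    (h2 : ∀ y, g (g' y) = y) (X : Ω → α) :
    Hent μ (fun ω => g (X ω)) = Hent μ X :=
  Hent_comp_bij μ g (Function.bijective_iff_has_inverse.mpr ⟨g', h1, h2⟩) X

lemma sum2_one {A C : Type} [Fintype A] [Fintype C] (f : A → ℝ) (g : C → ℝ) (K : ℝ)
    (hf : ∑ a, f a = 1) (hg : ∑ c, g c = 1) :
    ∑ a, ∑ c, f a * g c * K = K := by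
  rw [sum2_factor, hf, hg, one_mul, one_mul]

end Aux2

theorem stmt11 (μ : FinProb Ω) {A B C D E : Type}
    [Fintype A] [DecidableEq A] [Fintype B] [DecidableEq B]
    [Fintype C] [DecidableEq C] [Fintype D] [DecidableEq D]
    [Fintype E] [DecidableEq E]
    (Y1 : Ω → A) (X1 : Ω → B) (Y2 : Ω → C) (X2 : Ω → D) (Y3 : Ω → E)
    (hind : ∀ (a : A) (b : B) (c : C) (d : D),
      probOf μ (fun ω => (Y1 ω, X1 ω, Y2 ω, X2 ω)) (a, b, c, d)
        = probOf μ Y1 a * probOf μ X1 b * probOf μ Y2 c * probOf μ X2 d)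
    (hci : ∀ (e : E) (a : A) (c : C) (b : B) (d : D),
      probOf μ (fun ω => (Y3 ω, Y1 ω, Y2 ω, X1 ω, X2 ω)) (e, a, c, b, d) *
          probOf μ (fun ω => (X1 ω, X2 ω)) (b, d)
        = probOf μ (fun ω => (Y3 ω, X1 ω, X2 ω)) (e, b, d) *
            probOf μ (fun ω => (Y1 ω, Y2 ω, X1 ω, X2 ω)) (a, c, b, d)) :
    MI μ (fun ω => (Y1 ω, X1 ω)) (fun ω => (Y2 ω, X2 ω, Y3 ω)) = CMI μ X1 Y3 X2 := by
  classical
  -- independence of X1 and X2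
  have hXX : ∀ (b : B) (d : D), probOf μ (fun ω => (X1 ω, X2 ω)) (b, d)
      = probOf μ X1 b * probOf μ X2 d := by
    intro b d
    rw [probOf_marg μ (fun ω => (X1 ω, X2 ω)) (fun ω => (Y1 ω, Y2 ω)) (b, d)]
    have hterm : ∀ v : A × C, probOf μ (fun ω => ((X1 ω, X2 ω), (Y1 ω, Y2 ω))) ((b, d), v)
        = probOf μ Y1 v.1 * probOf μ Y2 v.2 * (probOf μ X1 b * probOf μ X2 d) := by
      rintro ⟨a, c⟩
      have h1 : probOf μ (fun ω => ((X1 ω, X2 ω), (Y1 ω, Y2 ω))) ((b, d), (a, c))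
          = probOf μ (fun ω => (Y1 ω, X1 ω, Y2 ω, X2 ω)) (a, b, c, d) :=
        probOf_reindex μ (fun t : A × B × C × D => ((t.2.1, t.2.2.2), (t.1, t.2.2.1)))
          (fun s => (s.2.1, s.1.1, s.2.2, s.1.2)) (fun _ => rfl)
          (fun ω => (Y1 ω, X1 ω, Y2 ω, X2 ω)) (a, b, c, d)
      rw [h1, hind]; ring
    simp only [hterm]
    rw [Fintype.sum_prod_type]
    exact sum2_one _ _ _ (probOf_sum_one μ Y1) (probOf_sum_one μ Y2)
  -- independence of Y1 and X1
  have hYX1 : ∀ (a : A) (b : B), probOf μ (fun ω => (Y1 ω, X1 ω)) (a, b)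
      = probOf μ Y1 a * probOf μ X1 b := by
    intro a b
    rw [probOf_marg μ (fun ω => (Y1 ω, X1 ω)) (fun ω => (Y2 ω, X2 ω)) (a, b)]
    have hterm : ∀ v : C × D, probOf μ (fun ω => ((Y1 ω, X1 ω), (Y2 ω, X2 ω))) ((a, b), v)
        = probOf μ Y2 v.1 * probOf μ X2 v.2 * (probOf μ Y1 a * probOf μ X1 b) := by
      rintro ⟨c, d⟩
      have h1 : probOf μ (fun ω => ((Y1 ω, X1 ω), (Y2 ω, X2 ω))) ((a, b), (c, d))
          = probOf μ (fun ω => (Y1 ω, X1 ω, Y2 ω, X2 ω)) (a, b, c, d) :=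
        probOf_reindex μ (fun t : A × B × C × D => ((t.1, t.2.1), (t.2.2.1, t.2.2.2)))
          (fun s => (s.1.1, s.1.2, s.2.1, s.2.2)) (fun _ => rfl)
          (fun ω => (Y1 ω, X1 ω, Y2 ω, X2 ω)) (a, b, c, d)
      rw [h1, hind]; ring
    simp only [hterm]
    rw [Fintype.sum_prod_type]
    exact sum2_one _ _ _ (probOf_sum_one μ Y2) (probOf_sum_one μ X2)
  -- independence of Y1 and Y2
  have hYY : ∀ (a : A) (c : C), probOf μ (fun ω => (Y1 ω, Y2 ω)) (a, c)
      = probOf μ Y1 a * probOf μ Y2 c := by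
    intro a c
    rw [probOf_marg μ (fun ω => (Y1 ω, Y2 ω)) (fun ω => (X1 ω, X2 ω)) (a, c)]
    have hterm : ∀ v : B × D, probOf μ (fun ω => ((Y1 ω, Y2 ω), (X1 ω, X2 ω))) ((a, c), v)
        = probOf μ X1 v.1 * probOf μ X2 v.2 * (probOf μ Y1 a * probOf μ Y2 c) := by
      rintro ⟨b, d⟩
      have h1 : probOf μ (fun ω => ((Y1 ω, Y2 ω), (X1 ω, X2 ω))) ((a, c), (b, d))
          = probOf μ (fun ω => (Y1 ω, X1 ω, Y2 ω, X2 ω)) (a, b, c, d) :=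
        probOf_reindex μ (fun t : A × B × C × D => ((t.1, t.2.2.1), (t.2.1, t.2.2.2)))
          (fun s => (s.1.1, s.2.1, s.1.2, s.2.2)) (fun _ => rfl)
          (fun ω => (Y1 ω, X1 ω, Y2 ω, X2 ω)) (a, b, c, d)
      rw [h1, hind]; ring
    simp only [hterm]
    rw [Fintype.sum_prod_type]
    exact sum2_one _ _ _ (probOf_sum_one μ X1) (probOf_sum_one μ X2)
  -- reordered four-variable independence
  have hind' : ∀ (a : A) (c : C) (b : B) (d : D),
      probOf μ (fun ω => (Y1 ω, Y2 ω, X1 ω, X2 ω)) (a, c, b, d)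
        = probOf μ Y1 a * probOf μ X1 b * probOf μ Y2 c * probOf μ X2 d := by
    intro a c b d
    have h1 : probOf μ (fun ω => (Y1 ω, Y2 ω, X1 ω, X2 ω)) (a, c, b, d)
        = probOf μ (fun ω => (Y1 ω, X1 ω, Y2 ω, X2 ω)) (a, b, c, d) :=
      probOf_reindex μ (fun t : A × B × C × D => (t.1, t.2.2.1, t.2.1, t.2.2.2))
        (fun s => (s.1, s.2.2.1, s.2.1, s.2.2.2)) (fun _ => rfl)
        (fun ω => (Y1 ω, X1 ω, Y2 ω, X2 ω)) (a, b, c, d)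
    rw [h1, hind]
  -- marginal: p(X1,X2) as sum over Y3 of p(Y3,X1,X2)
  have hp3m : ∀ (b : B) (d : D), probOf μ (fun ω => (X1 ω, X2 ω)) (b, d)
      = ∑ e : E, probOf μ (fun ω => (Y3 ω, X1 ω, X2 ω)) (e, b, d) := by
    intro b d
    rw [probOf_marg μ (fun ω => (X1 ω, X2 ω)) Y3 (b, d)]
    refine Finset.sum_congr rfl fun e _ => ?_
    exact probOf_reindex μ (fun t : E × B × D => ((t.2.1, t.2.2), t.1))
      (fun s => (s.2, s.1.1, s.1.2)) (fun _ => rfl)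
      (fun ω => (Y3 ω, X1 ω, X2 ω)) (e, b, d)
  -- marginal: p(X1,X2) as sum over (Y3,Y1,Y2) of p5
  have hp5m : ∀ (b : B) (d : D), probOf μ (fun ω => (X1 ω, X2 ω)) (b, d)
      = ∑ w : E × A × C,
          probOf μ (fun ω => (Y3 ω, Y1 ω, Y2 ω, X1 ω, X2 ω)) (w.1, w.2.1, w.2.2, b, d) := by
    intro b d
    rw [probOf_marg μ (fun ω => (X1 ω, X2 ω)) (fun ω => (Y3 ω, Y1 ω, Y2 ω)) (b, d)]
    refine Finset.sum_congr rfl fun w _ => ?_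
    exact probOf_reindex μ
      (fun t : E × A × C × B × D => ((t.2.2.2.1, t.2.2.2.2), (t.1, t.2.1, t.2.2.1)))
      (fun s => (s.2.1, s.2.2.1, s.2.2.2, s.1.1, s.1.2)) (fun _ => rfl)
      (fun ω => (Y3 ω, Y1 ω, Y2 ω, X1 ω, X2 ω)) (w.1, w.2.1, w.2.2, b, d)
  -- the key factorization of the five-variable pmf
  have star : ∀ (e : E) (a : A) (c : C) (b : B) (d : D),
      probOf μ (fun ω => (Y3 ω, Y1 ω, Y2 ω, X1 ω, X2 ω)) (e, a, c, b, d)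
        = probOf μ (fun ω => (Y3 ω, X1 ω, X2 ω)) (e, b, d)
            * (probOf μ Y1 a * probOf μ Y2 c) := by
    intro e a c b d
    by_cases h0 : probOf μ X1 b * probOf μ X2 d = 0
    · have hbd : probOf μ (fun ω => (X1 ω, X2 ω)) (b, d) = 0 := by rw [hXX]; exact h0
      have h3 : probOf μ (fun ω => (Y3 ω, X1 ω, X2 ω)) (e, b, d) = 0 := by
        have hle : probOf μ (fun ω => (Y3 ω, X1 ω, X2 ω)) (e, b, d)
            ≤ ∑ e' : E, probOf μ (fun ω => (Y3 ω, X1 ω, X2 ω)) (e', b, d) :=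
          Finset.single_le_sum (f := fun e' : E => probOf μ (fun ω => (Y3 ω, X1 ω, X2 ω)) (e', b, d))
            (fun e' _ => probOf_nonneg μ _ _) (Finset.mem_univ e)
        rw [← hp3m, hbd] at hle
        exact le_antisymm hle (probOf_nonneg μ _ _)
      have h5 : probOf μ (fun ω => (Y3 ω, Y1 ω, Y2 ω, X1 ω, X2 ω)) (e, a, c, b, d) = 0 := by
        have hle : probOf μ (fun ω => (Y3 ω, Y1 ω, Y2 ω, X1 ω, X2 ω)) (e, a, c, b, d)
            ≤ ∑ w : E × A × C,
              probOf μ (fun ω => (Y3 ω, Y1 ω, Y2 ω, X1 ω, X2 ω)) (w.1, w.2.1, w.2.2, b, d) :=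
          Finset.single_le_sum (f := fun w : E × A × C =>
              probOf μ (fun ω => (Y3 ω, Y1 ω, Y2 ω, X1 ω, X2 ω)) (w.1, w.2.1, w.2.2, b, d))
            (fun w _ => probOf_nonneg μ _ _) (Finset.mem_univ (e, a, c))
        rw [← hp5m, hbd] at hle
        exact le_antisymm hle (probOf_nonneg μ _ _)
      rw [h5, h3]; ring
    · have hc := hci e a c b d
      rw [hXX, hind'] at hc
      apply mul_right_cancel₀ h0
      linear_combination hc
  -- marginal: p(X2,Y3)
  have hX2Y3m : ∀ (d : D) (e : E), probOf μ (fun ω => (X2 ω, Y3 ω)) (d, e)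
      = ∑ b : B, probOf μ (fun ω => (Y3 ω, X1 ω, X2 ω)) (e, b, d) := by
    intro d e
    rw [probOf_marg μ (fun ω => (X2 ω, Y3 ω)) X1 (d, e)]
    refine Finset.sum_congr rfl fun b _ => ?_
    exact probOf_reindex μ (fun t : E × B × D => ((t.2.2, t.1), t.2.1))
      (fun s => (s.1.2, s.2, s.1.1)) (fun _ => rfl)
      (fun ω => (Y3 ω, X1 ω, X2 ω)) (e, b, d)
  -- independence of Y2 and (X2,Y3)
  have hQ : ∀ (c : C) (v : D × E), probOf μ (fun ω => (Y2 ω, (X2 ω, Y3 ω))) (c, v)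
      = probOf μ Y2 c * probOf μ (fun ω => (X2 ω, Y3 ω)) v := by
    rintro c ⟨d, e⟩
    rw [probOf_marg μ (fun ω => (Y2 ω, (X2 ω, Y3 ω))) (fun ω => (Y1 ω, X1 ω)) (c, (d, e))]
    have hterm : ∀ w : A × B,
        probOf μ (fun ω => ((Y2 ω, (X2 ω, Y3 ω)), (Y1 ω, X1 ω))) ((c, (d, e)), w)
          = probOf μ Y1 w.1 * probOf μ (fun ω => (Y3 ω, X1 ω, X2 ω)) (e, w.2, d)
              * probOf μ Y2 c := by
      rintro ⟨a, b⟩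
      have h1 : probOf μ (fun ω => ((Y2 ω, (X2 ω, Y3 ω)), (Y1 ω, X1 ω))) ((c, (d, e)), (a, b))
          = probOf μ (fun ω => (Y3 ω, Y1 ω, Y2 ω, X1 ω, X2 ω)) (e, a, c, b, d) :=
        probOf_reindex μ
          (fun t : E × A × C × B × D => ((t.2.2.1, (t.2.2.2.2, t.1)), (t.2.1, t.2.2.2.1)))
          (fun s => (s.1.2.2, s.2.1, s.1.1, s.2.2, s.1.2.1)) (fun _ => rfl)
          (fun ω => (Y3 ω, Y1 ω, Y2 ω, X1 ω, X2 ω)) (e, a, c, b, d)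
      rw [h1, star]; ring
    simp only [hterm]
    rw [Fintype.sum_prod_type]
    rw [sum2_factor (fun a => probOf μ Y1 a)
      (fun b => probOf μ (fun ω => (Y3 ω, X1 ω, X2 ω)) (e, b, d)) (probOf μ Y2 c),
      probOf_sum_one, one_mul, ← hX2Y3m]
    ring
  -- independence of (Y3,(X1,X2)) and (Y1,Y2)
  have hJpair : ∀ (u : E × B × D) (v : A × C),
      probOf μ (fun ω => ((Y3 ω, (X1 ω, X2 ω)), (Y1 ω, Y2 ω))) (u, v)
        = probOf μ (fun ω => (Y3 ω, (X1 ω, X2 ω))) u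
            * probOf μ (fun ω => (Y1 ω, Y2 ω)) v := by
    rintro ⟨e, b, d⟩ ⟨a, c⟩
    have h1 : probOf μ (fun ω => ((Y3 ω, (X1 ω, X2 ω)), (Y1 ω, Y2 ω))) ((e, (b, d)), (a, c))
        = probOf μ (fun ω => (Y3 ω, Y1 ω, Y2 ω, X1 ω, X2 ω)) (e, a, c, b, d) :=
      probOf_reindex μ
        (fun t : E × A × C × B × D => ((t.1, (t.2.2.2.1, t.2.2.2.2)), (t.2.1, t.2.2.1)))
        (fun s => (s.1.1, s.2.1, s.2.2, s.1.2.1, s.1.2.2)) (fun _ => rfl)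
        (fun ω => (Y3 ω, Y1 ω, Y2 ω, X1 ω, X2 ω)) (e, a, c, b, d)
    have h2 : probOf μ (fun ω => (Y3 ω, (X1 ω, X2 ω))) (e, (b, d))
        = probOf μ (fun ω => (Y3 ω, X1 ω, X2 ω)) (e, b, d) :=
      probOf_reindex μ (fun t : E × B × D => (t.1, (t.2.1, t.2.2)))
        (fun s => (s.1, s.2.1, s.2.2)) (fun _ => rfl)
        (fun ω => (Y3 ω, X1 ω, X2 ω)) (e, b, d)
    rw [h1, star, h2, hYY]
  -- entropy identities
  have eH1 : Hent μ (fun ω => (Y1 ω, X1 ω)) = Hent μ Y1 + Hent μ X1 :=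
    Hent_add_of_indep μ Y1 X1 hYX1
  have eH4 : Hent μ (fun ω => (X1 ω, X2 ω)) = Hent μ X1 + Hent μ X2 :=
    Hent_add_of_indep μ X1 X2 hXX
  have eHQ : Hent μ (fun ω => (Y2 ω, X2 ω, Y3 ω))
      = Hent μ Y2 + Hent μ (fun ω => (X2 ω, Y3 ω)) :=
    Hent_add_of_indep μ Y2 (fun ω => (X2 ω, Y3 ω)) hQ
  have eYY : Hent μ (fun ω => (Y1 ω, Y2 ω)) = Hent μ Y1 + Hent μ Y2 :=
    Hent_add_of_indep μ Y1 Y2 hYY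
  have eJ1 : Hent μ (fun ω => ((Y1 ω, X1 ω), (Y2 ω, X2 ω, Y3 ω)))
      = Hent μ (fun ω => ((Y3 ω, (X1 ω, X2 ω)), (Y1 ω, Y2 ω))) :=
    Hent_reindex μ
      (fun s : (E × B × D) × A × C => ((s.2.1, s.1.2.1), (s.2.2, s.1.2.2, s.1.1)))
      (fun y : (A × B) × C × D × E => ((y.2.2.2, (y.1.2, y.2.2.1)), (y.1.1, y.2.1)))
      (fun _ => rfl) (fun _ => rfl)
      (fun ω => ((Y3 ω, (X1 ω, X2 ω)), (Y1 ω, Y2 ω)))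
  have eJ2 : Hent μ (fun ω => ((Y3 ω, (X1 ω, X2 ω)), (Y1 ω, Y2 ω)))
      = Hent μ (fun ω => (Y3 ω, (X1 ω, X2 ω))) + Hent μ (fun ω => (Y1 ω, Y2 ω)) :=
    Hent_add_of_indep μ (fun ω => (Y3 ω, (X1 ω, X2 ω))) (fun ω => (Y1 ω, Y2 ω)) hJpair
  have eSwap : Hent μ (fun ω => (Y3 ω, X2 ω)) = Hent μ (fun ω => (X2 ω, Y3 ω)) :=
    (Hent_reindex μ (fun t : E × D => (t.2, t.1)) (fun t => (t.2, t.1))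
      (fun _ => rfl) (fun _ => rfl) (fun ω => (Y3 ω, X2 ω))).symm
  have eGrp : Hent μ (fun ω => ((X1 ω, Y3 ω), X2 ω))
      = Hent μ (fun ω => (Y3 ω, (X1 ω, X2 ω))) :=
    Hent_reindex μ (fun t : E × B × D => ((t.2.1, t.1), t.2.2))
      (fun s : (B × E) × D => (s.1.2, (s.1.1, s.2))) (fun _ => rfl) (fun _ => rfl)
      (fun ω => (Y3 ω, (X1 ω, X2 ω)))
  simp only [MI, CMI, Hcond]
  rw [eH1, eHQ, eJ1, eJ2, eYY, eH4, eSwap, eGrp]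
  ring
end

section
/- Let A₁, A₂, V₁, V₂ be finite-valued random variables such that A₁ and A₂ are independent, and the pair (A₁, A₂) is independent of the pair (V₁, V₂). Set U₁ = (A₁, V₁), U₂ = (A₂, V₂), and X = (A₁, A₂). Then I(U₁, U₂ ; X) + I(U₁ ; U₂) = H(A₁) + H(A₂) + I(V₁ ; V₂). -/
open Finset

variable {Ω : Type} [Fintype Ω]

lemma sum_probOf (μ : FinProb Ω) {α : Type} [Fintype α] [DecidableEq α] (X : Ω → α) :
    ∑ x, probOf μ X x = 1 := by
  unfold probOf
  rw [Finset.sum_fiberwise univ X μ.p]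
  exact μ.sum_one

lemma probOf_fst (μ : FinProb Ω) {α β : Type} [Fintype β] [DecidableEq α] [DecidableEq β]
    (Z : Ω → α × β) (x : α) :
    probOf μ (fun ω => (Z ω).1) x = ∑ y, probOf μ Z (x, y) := by
  unfold probOf
  rw [← Finset.sum_fiberwise (univ.filter fun ω => (Z ω).1 = x) (fun ω => (Z ω).2) μ.p]
  refine Finset.sum_congr rfl fun y _ => ?_
  rw [Finset.filter_filter]
  congr 1
  ext ω
  simp [Prod.ext_iff]

lemma probOf_snd (μ : FinProb Ω) {α β : Type} [Fintype α] [DecidableEq α] [DecidableEq β]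
    (Z : Ω → α × β) (y : β) :
    probOf μ (fun ω => (Z ω).2) y = ∑ x, probOf μ Z (x, y) := by
  unfold probOf
  rw [← Finset.sum_fiberwise (univ.filter fun ω => (Z ω).2 = y) (fun ω => (Z ω).1) μ.p]
  refine Finset.sum_congr rfl fun x _ => ?_
  rw [Finset.filter_filter]
  congr 1
  ext ω
  simp [Prod.ext_iff, and_comm]

lemma Hent_comp_inj (μ : FinProb Ω) {α β : Type} [Fintype α] [DecidableEq α]
    [Fintype β] [DecidableEq β] (X : Ω → α) (e : α → β) (he : Function.Injective e) :
    Hent μ (fun ω => e (X ω)) = Hent μ X := by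
  unfold Hent
  rw [← Finset.sum_subset (Finset.subset_univ (Finset.image e univ))
    (fun y _ hy => ?_)]
  · rw [Finset.sum_image (fun a _ b _ h => he h)]
    refine Finset.sum_congr rfl fun x _ => ?_
    congr 1
    unfold probOf
    congr 1
    ext ω
    simp [he.eq_iff]
  · have : probOf μ (fun ω => e (X ω)) y = 0 := by
      unfold probOf
      rw [Finset.filter_false_of_mem, Finset.sum_empty]
      intro ω _
      intro h
      exact hy (Finset.mem_image.2 ⟨X ω, Finset.mem_univ _, h⟩)
    rw [this, Real.negMulLog_zero]

lemma Hent_pair_of_indep (μ : FinProb Ω) {α β : Type} [Fintype α] [DecidableEq α]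
    [Fintype β] [DecidableEq β] (X : Ω → α) (Y : Ω → β)
    (h : ∀ x y, probOf μ (fun ω => (X ω, Y ω)) (x, y) = probOf μ X x * probOf μ Y y) :
    Hent μ (fun ω => (X ω, Y ω)) = Hent μ X + Hent μ Y := by
  unfold Hent
  rw [Fintype.sum_prod_type]
  have key : ∀ x : α, ∑ y : β, Real.negMulLog (probOf μ (fun ω => (X ω, Y ω)) (x, y))
      = probOf μ X x * (∑ y, Real.negMulLog (probOf μ Y y))
        + Real.negMulLog (probOf μ X x) := by
    intro x
    have h1 : ∀ y : β, Real.negMulLog (probOf μ (fun ω => (X ω, Y ω)) (x, y))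
        = probOf μ Y y * Real.negMulLog (probOf μ X x)
          + probOf μ X x * Real.negMulLog (probOf μ Y y) := by
      intro y; rw [h x y, Real.negMulLog_mul]
    rw [Finset.sum_congr rfl (fun y _ => h1 y), Finset.sum_add_distrib,
      ← Finset.sum_mul, sum_probOf, one_mul, ← Finset.mul_sum]
    ring
  rw [Finset.sum_congr rfl (fun x _ => key x), Finset.sum_add_distrib,
    ← Finset.sum_mul, sum_probOf, one_mul]
  ring

lemma probOf_comp_inj (μ : FinProb Ω) {α β : Type} [DecidableEq α] [DecidableEq β]
    (X : Ω → α) (e : α → β) (he : Function.Injective e) (x : α) :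
    probOf μ (fun ω => e (X ω)) (e x) = probOf μ X x := by
  unfold probOf
  congr 1
  ext ω
  simp [he.eq_iff]


theorem stmt12 (μ : FinProb Ω) {A B C D : Type}
    [Fintype A] [DecidableEq A] [Fintype B] [DecidableEq B]
    [Fintype C] [DecidableEq C] [Fintype D] [DecidableEq D]
    (A1 : Ω → A) (A2 : Ω → B) (V1 : Ω → C) (V2 : Ω → D)
    (hAind : ∀ (a : A) (b : B),
      probOf μ (fun ω => (A1 ω, A2 ω)) (a, b) = probOf μ A1 a * probOf μ A2 b)
    (hAV : ∀ (a : A) (b : B) (c : C) (d : D),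
      probOf μ (fun ω => ((A1 ω, A2 ω), (V1 ω, V2 ω))) ((a, b), (c, d))
        = probOf μ (fun ω => (A1 ω, A2 ω)) (a, b) *
            probOf μ (fun ω => (V1 ω, V2 ω)) (c, d)) :
    MI μ (fun ω => ((A1 ω, V1 ω), (A2 ω, V2 ω))) (fun ω => (A1 ω, A2 ω))
        + MI μ (fun ω => (A1 ω, V1 ω)) (fun ω => (A2 ω, V2 ω))
      = Hent μ A1 + Hent μ A2 + MI μ V1 V2 := by
    -- marginals of the V-pair
  have hV1 : ∀ c, probOf μ V1 c = ∑ d, probOf μ (fun ω => (V1 ω, V2 ω)) (c, d) :=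
    fun c => probOf_fst μ (fun ω => (V1 ω, V2 ω)) c
  have hV2 : ∀ d, probOf μ V2 d = ∑ c, probOf μ (fun ω => (V1 ω, V2 ω)) (c, d) :=
    fun d => probOf_snd μ (fun ω => (V1 ω, V2 ω)) d
  -- the reshuffled joint
  have einj : Function.Injective
      (fun p : (A × B) × (C × D) => ((p.1.1, p.2.1), (p.1.2, p.2.2))) := by
    rintro ⟨⟨a, b⟩, ⟨c, d⟩⟩ ⟨⟨a', b'⟩, ⟨c', d'⟩⟩ h
    simp only [Prod.ext_iff] at h ⊢
    tauto
  have h1 : ∀ a b c d, probOf μ (fun ω => ((A1 ω, V1 ω), (A2 ω, V2 ω))) ((a, c), (b, d))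
      = probOf μ A1 a * probOf μ A2 b * probOf μ (fun ω => (V1 ω, V2 ω)) (c, d) := by
    intro a b c d
    have h0 : probOf μ (fun ω => ((A1 ω, V1 ω), (A2 ω, V2 ω))) ((a, c), (b, d))
        = probOf μ (fun ω => ((A1 ω, A2 ω), (V1 ω, V2 ω))) ((a, b), (c, d)) :=
      probOf_comp_inj μ (fun ω => ((A1 ω, A2 ω), (V1 ω, V2 ω)))
        (fun p => ((p.1.1, p.2.1), (p.1.2, p.2.2))) einj ((a, b), (c, d))
    rw [h0, hAV, hAind]
  have hm1 : ∀ (a : A) (c : C), probOf μ (fun ω => (A1 ω, V1 ω)) (a, c)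
      = probOf μ A1 a * probOf μ V1 c := by
    intro a c
    have h0 : probOf μ (fun ω => (A1 ω, V1 ω)) (a, c)
        = ∑ y : B × D, probOf μ (fun ω => ((A1 ω, V1 ω), (A2 ω, V2 ω))) ((a, c), y) :=
      probOf_fst μ (fun ω => ((A1 ω, V1 ω), (A2 ω, V2 ω))) (a, c)
    rw [h0, Fintype.sum_prod_type]
    have step : ∀ b : B, ∑ d : D,
        probOf μ (fun ω => ((A1 ω, V1 ω), (A2 ω, V2 ω))) ((a, c), (b, d))
        = probOf μ A2 b * (probOf μ A1 a * probOf μ V1 c) := by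
      intro b
      rw [Finset.sum_congr rfl fun d _ => h1 a b c d, ← Finset.mul_sum, ← hV1 c]
      ring
    rw [Finset.sum_congr rfl fun b _ => step b, ← Finset.sum_mul, sum_probOf, one_mul]
  have hm2 : ∀ (b : B) (d : D), probOf μ (fun ω => (A2 ω, V2 ω)) (b, d)
      = probOf μ A2 b * probOf μ V2 d := by
    intro b d
    have h0 : probOf μ (fun ω => (A2 ω, V2 ω)) (b, d)
        = ∑ x : A × C, probOf μ (fun ω => ((A1 ω, V1 ω), (A2 ω, V2 ω))) (x, (b, d)) :=
      probOf_snd μ (fun ω => ((A1 ω, V1 ω), (A2 ω, V2 ω))) (b, d)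
    rw [h0, Fintype.sum_prod_type]
    have step : ∀ a : A, ∑ c : C,
        probOf μ (fun ω => ((A1 ω, V1 ω), (A2 ω, V2 ω))) ((a, c), (b, d))
        = probOf μ A1 a * (probOf μ A2 b * probOf μ V2 d) := by
      intro a
      have : ∀ c : C, probOf μ (fun ω => ((A1 ω, V1 ω), (A2 ω, V2 ω))) ((a, c), (b, d))
          = probOf μ A1 a * probOf μ A2 b * probOf μ (fun ω => (V1 ω, V2 ω)) (c, d) :=
        fun c => h1 a b c d
      rw [Finset.sum_congr rfl fun c _ => this c, ← Finset.mul_sum, ← hV2 d]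
      ring
    rw [Finset.sum_congr rfl fun a _ => step a, ← Finset.sum_mul, sum_probOf, one_mul]
  -- entropies
  have HA : Hent μ (fun ω => (A1 ω, A2 ω)) = Hent μ A1 + Hent μ A2 :=
    Hent_pair_of_indep μ A1 A2 hAind
  have HU1 : Hent μ (fun ω => (A1 ω, V1 ω)) = Hent μ A1 + Hent μ V1 :=
    Hent_pair_of_indep μ A1 V1 hm1
  have HU2 : Hent μ (fun ω => (A2 ω, V2 ω)) = Hent μ A2 + Hent μ V2 :=
    Hent_pair_of_indep μ A2 V2 hm2
  have HW : Hent μ (fun ω => ((A1 ω, A2 ω), (V1 ω, V2 ω)))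
      = Hent μ (fun ω => (A1 ω, A2 ω)) + Hent μ (fun ω => (V1 ω, V2 ω)) :=
    Hent_pair_of_indep μ (fun ω => (A1 ω, A2 ω)) (fun ω => (V1 ω, V2 ω))
      (fun x y => hAV x.1 x.2 y.1 y.2)
  have Hbig : Hent μ (fun ω => (((A1 ω, V1 ω), (A2 ω, V2 ω)), (A1 ω, A2 ω)))
      = Hent μ (fun ω => ((A1 ω, A2 ω), (V1 ω, V2 ω))) := by
    refine Hent_comp_inj μ (fun ω => ((A1 ω, A2 ω), (V1 ω, V2 ω)))
      (fun p => (((p.1.1, p.2.1), (p.1.2, p.2.2)), (p.1.1, p.1.2))) ?_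
    rintro ⟨⟨a, b⟩, ⟨c, d⟩⟩ ⟨⟨a', b'⟩, ⟨c', d'⟩⟩ h
    simp only [Prod.ext_iff] at h ⊢
    tauto
  simp only [MI]
  rw [HA, HU1, HU2, Hbig, HW, HA]
  ring
end

section
/- Let m ≥ 1, let (U_j)_{j∈[1:m]} and Y be finite-valued random variables, and for each j ∈ [1:m] let A_j ⊆ [1:j-1]. For any nonempty S ⊆ [1:m]: ∑_{j∈S} H(U_j | U_{A_j}) − H(U_S | U_{S^c}, Y) = ∑_{j∈S} I(U_j ; U_{S[j] ∪ S^c}, Y | U_{A_j}), provided A_j ⊆ S[j] ∪ S^c for every j ∈ S. -/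
open Finset

variable {Ω : Type} [Fintype Ω]

/-! The sum of the `H(U_j | U_{A_j})` cancels against the first half of each conditional mutual
information, because `U_{A_j}` is a function of `(U_{S[j] ∪ Sᶜ}, Y)`. What remains is the sum of
the increments `H(U_{S[j] ∪ Sᶜ}, Y) - H(U_j, U_{S[j] ∪ Sᶜ}, Y)`, which telescopes along `S` to
`H(U_{Sᶜ}, Y) - H(U, Y) = -H(U_S | U_{Sᶜ}, Y)`. -/

lemma Hent_eq_sum_image (μ : FinProb Ω) {α : Type} [Fintype α] [DecidableEq α] (X : Ω → α) :
    Hent μ X = ∑ x ∈ univ.image X, Real.negMulLog (probOf μ X x) := by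
  refine (sum_subset (subset_univ _) fun x _ hx => ?_).symm
  rw [probOf, filter_false_of_mem fun ω _ (hω : X ω = x) =>
    hx (hω ▸ mem_image_of_mem X (mem_univ ω)), sum_empty, Real.negMulLog_zero]

lemma Hent_comp_of_injOn (μ : FinProb Ω) {α β : Type} [Fintype α] [DecidableEq α]
    [Fintype β] [DecidableEq β] (X : Ω → α) {f : α → β} (hf : Set.InjOn f (Set.range X)) :
    Hent μ (fun ω => f (X ω)) = Hent μ X := by
  have hf' : Set.InjOn f (univ.image X : Finset α) := by
    simpa only [coe_image, coe_univ, Set.image_univ] using hf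
  rw [Hent_eq_sum_image, Hent_eq_sum_image,
    show univ.image (fun ω => f (X ω)) = (univ.image X).image f from image_image.symm,
    sum_image hf']
  refine sum_congr rfl fun x hx => ?_
  obtain ⟨ω₀, -, rfl⟩ := mem_image.1 hx
  unfold probOf
  congr 2
  ext ω
  simp only [mem_filter, mem_univ, true_and]
  exact hf.eq_iff ⟨ω, rfl⟩ ⟨ω₀, rfl⟩

lemma Hent_eq_of_eq_comp (μ : FinProb Ω) {α β : Type} [Fintype α] [DecidableEq α]
    [Fintype β] [DecidableEq β] {X : Ω → α} {Z : Ω → β} (f : β → α) (g : α → β)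
    (hX : ∀ ω, X ω = f (Z ω)) (hZ : ∀ ω, Z ω = g (X ω)) :
    Hent μ X = Hent μ Z := by
  obtain rfl : X = fun ω => f (Z ω) := funext hX
  refine Hent_comp_of_injOn μ Z ?_
  rintro _ ⟨ω, rfl⟩ _ ⟨ω', rfl⟩ (h : f (Z ω) = f (Z ω'))
  rw [hZ ω, hZ ω']
  exact congrArg g h

lemma Hent_prod_eq_of_eq_comp (μ : FinProb Ω) {α β : Type} [Fintype α] [DecidableEq α]
    [Fintype β] [DecidableEq β] {Z : Ω → α} {W : Ω → β} (g : α → β) (hW : ∀ ω, W ω = g (Z ω)) :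
    Hent μ (fun ω => (Z ω, W ω)) = Hent μ Z :=
  Hent_eq_of_eq_comp μ (fun z => (z, g z)) Prod.fst (fun ω => by rw [hW]) fun _ => rfl

lemma CMI_eq_of_eq_comp (μ : FinProb Ω) {α β γ : Type} [Fintype α] [DecidableEq α]
    [Fintype β] [DecidableEq β] [Fintype γ] [DecidableEq γ]
    (X : Ω → α) (Z : Ω → β) (W : Ω → γ) (g : β → γ) (hW : ∀ ω, W ω = g (Z ω)) :
    CMI μ X Z W = Hcond μ X W + Hent μ Z - Hent μ (fun ω => (X ω, Z ω)) := by
  unfold CMI Hcond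
  rw [Hent_prod_eq_of_eq_comp μ g hW,
    Hent_prod_eq_of_eq_comp (Z := fun ω => (X ω, Z ω)) μ (fun p => g p.2) hW]
  ring

section tupleOn

variable {m : ℕ} {α : Fin m → Type} [∀ i, Fintype (α i)] [∀ i, DecidableEq (α i)]
  {β : Type} [Fintype β] [DecidableEq β]

lemma Hent_tupleOn_union (μ : FinProb Ω) (U : ∀ i, Ω → α i) (Z : Ω → β)
    (T₁ T₂ : Finset (Fin m)) :
    Hent μ (fun ω => (tupleOn U T₁ ω, (tupleOn U T₂ ω, Z ω)))
      = Hent μ (fun ω => (tupleOn U (T₁ ∪ T₂) ω, Z ω)) := by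
  refine Hent_eq_of_eq_comp μ
    (fun v => (fun i => v.1 ⟨i.1, mem_union_left _ i.2⟩,
      (fun i => v.1 ⟨i.1, mem_union_right _ i.2⟩, v.2)))
    (fun v => (fun i => if h : i.1 ∈ T₁ then v.1 ⟨i.1, h⟩
      else v.2.1 ⟨i.1, (mem_union.1 i.2).resolve_left h⟩, v.2.2))
    (fun _ => rfl) fun ω => ?_
  ext i
  · dsimp only
    split_ifs <;> rfl
  · rfl

lemma Hent_tupleOn_singleton (μ : FinProb Ω) (U : ∀ i, Ω → α i) (Z : Ω → β) (j : Fin m) :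
    Hent μ (fun ω => (U j ω, Z ω)) = Hent μ (fun ω => (tupleOn U {j} ω, Z ω)) := by
  refine Hent_eq_of_eq_comp μ (fun v => (v.1 ⟨j, mem_singleton_self j⟩, v.2))
    (fun v => (fun i => cast (congrArg α (mem_singleton.1 i.2).symm) v.1, v.2))
    (fun _ => rfl) fun ω => ?_
  ext ⟨i, hi⟩
  · obtain rfl := mem_singleton.1 hi
    rfl
  · rfl

lemma Hent_tupleOn_insert (μ : FinProb Ω) (U : ∀ i, Ω → α i) (Z : Ω → β) (j : Fin m)
    (T : Finset (Fin m)) :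
    Hent μ (fun ω => (U j ω, (tupleOn U T ω, Z ω)))
      = Hent μ (fun ω => (tupleOn U (insert j T) ω, Z ω)) := by
  rw [Hent_tupleOn_singleton, Hent_tupleOn_union, insert_eq]

end tupleOn

lemma sum_sub_insert_filter_lt {ι M : Type*} [LinearOrder ι] [AddCommGroup M]
    (E : Finset ι → M) (C S : Finset ι) :
    ∑ j ∈ S, (E (S.filter (· < j) ∪ C) - E (insert j (S.filter (· < j) ∪ C)))
      = E C - E (S ∪ C) := by
  induction S using Finset.induction_on_max with
  | empty => simp
  | insert a s ha ih =>
    have h_lt : ∀ j ∈ s, (insert a s).filter (· < j) = s.filter (· < j) := fun j hj => by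
      rw [filter_insert, if_neg (ha j hj).le.not_gt]
    have h_a : (insert a s).filter (· < a) = s := by
      rw [filter_insert, if_neg (lt_irrefl a), filter_true_of_mem ha]
    rw [sum_insert fun h => lt_irrefl a (ha a h), sum_congr rfl fun j hj => by rw [h_lt j hj],
      h_a, ih, insert_union]
    abel

theorem stmt13_general (μ : FinProb Ω) {m : ℕ} {α : Fin m → Type}
    [∀ i, Fintype (α i)] [∀ i, DecidableEq (α i)]
    {β : Type} [Fintype β] [DecidableEq β]
    (U : ∀ i, Ω → α i) (Y : Ω → β) (A : Fin m → Finset (Fin m))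
    (S : Finset (Fin m))
    (hAS : ∀ j ∈ S, A j ⊆ S.filter (· < j) ∪ Sᶜ) :
    (∑ j ∈ S, Hcond μ (U j) (tupleOn U (A j)))
        - Hcond μ (tupleOn U S) (fun ω => (tupleOn U Sᶜ ω, Y ω))
      = ∑ j ∈ S, CMI μ (U j)
          (fun ω => (tupleOn U (S.filter (· < j) ∪ Sᶜ) ω, Y ω)) (tupleOn U (A j)) := by
  set E : Finset (Fin m) → ℝ := fun T => Hent μ (fun ω => (tupleOn U T ω, Y ω))
  have h_cond : Hcond μ (tupleOn U S) (fun ω => (tupleOn U Sᶜ ω, Y ω)) = E univ - E Sᶜ := by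
    rw [Hcond, Hent_tupleOn_union, union_compl]
  have h_term : ∀ j ∈ S, CMI μ (U j)
      (fun ω => (tupleOn U (S.filter (· < j) ∪ Sᶜ) ω, Y ω)) (tupleOn U (A j))
      = Hcond μ (U j) (tupleOn U (A j))
        + (E (S.filter (· < j) ∪ Sᶜ) - E (insert j (S.filter (· < j) ∪ Sᶜ))) := fun j hj => by
    rw [CMI_eq_of_eq_comp μ (U j) (fun ω => (tupleOn U (S.filter (· < j) ∪ Sᶜ) ω, Y ω))
      (tupleOn U (A j)) (fun v i => v.1 ⟨i.1, hAS j hj i.2⟩) fun _ => rfl,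
      Hent_tupleOn_insert]
    abel
  rw [sum_congr rfl h_term, sum_add_distrib, h_cond, sum_sub_insert_filter_lt, union_compl]
  abel

theorem stmt13 (μ : FinProb Ω) {m : ℕ} (hm : 1 ≤ m) {α : Fin m → Type}
    [∀ i, Fintype (α i)] [∀ i, DecidableEq (α i)]
    {β : Type} [Fintype β] [DecidableEq β]
    (U : ∀ i, Ω → α i) (Y : Ω → β) (A : Fin m → Finset (Fin m))
    (hAj : ∀ j : Fin m, ∀ i ∈ A j, i < j)
    (S : Finset (Fin m)) (hS : S.Nonempty)
    (hAS : ∀ j ∈ S, A j ⊆ S.filter (· < j) ∪ Sᶜ) :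
    (∑ j ∈ S, Hcond μ (U j) (tupleOn U (A j)))
        - Hcond μ (tupleOn U S) (fun ω => (tupleOn U Sᶜ ω, Y ω))
      = ∑ j ∈ S, CMI μ (U j)
          (fun ω => (tupleOn U (S.filter (· < j) ∪ Sᶜ) ω, Y ω)) (tupleOn U (A j)) :=
  stmt13_general μ U Y A S hAS
end
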